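/- arXiv:2203.12007 — 2 statements merged into one kernel-verified Lean document; each statement's English description precedes it below -/
import Mathlib

section
/- Fix m ≥ 1 and relative degrees r_1,…,r_m ≥ 1 with n = r_1+…+r_m; let A = blockdiag(A_1,…,A_m) ∈ ℝ^{n×n} and B = blockdiag(b_1,…,b_m) ∈ ℝ^{n×m} be the integrator system matrices, where A_j is the r_j×r_j nilpotent upper-shift matrix and b_j = e_{r_j}. Let t > 0, p ∈ [1,∞] with Hölder conjugate q, let ℓ^A, ℓ^B : [0,t] → ℝ_{>0} be continuous, let x₀^A, x₀^B ∈ ℝⁿ, and let X_t^A, X_t^B be the reach sets X_t^i := { exp(tA)x₀^i + ∫₀ᵗ exp(sA) B u(s) ds : u measurable, ‖u(s)‖_p ≤ ℓ^i(s) for all s ∈ [0,t] } for i ∈ {A, B}. Define c(t) := exp(tA)(x₀^A − x₀^B), G(s) := (ℓ^A(s)+ℓ^B(s)) exp(sA) B, and f₀(y) := ⟨c(t), y⟩ + ∫₀ᵗ ‖(G(s))ᵀ y‖_q ds. Let p̃* := min_{‖y‖₂ ≤ 1} f₀(y) and p* := min_{‖y‖₂ = 1} f₀(y). If p̃* < 0,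 then p̃* = p* < 0 and X_t^A ∩ X_t^B = ∅. -/
noncomputable section
open Matrix MeasureTheory TopologicalSpace Filter
open scoped ENNReal Pointwise

/-- The `r × r` nilpotent upper-shift matrix `N` with `N_{a,a+1} = 1`. -/
def shiftMat (r : ℕ) : Matrix (Fin r) (Fin r) ℝ :=
  fun a b => if (b : ℕ) = (a : ℕ) + 1 then 1 else 0

/-- `ξ(s) = (s^{r-1}/(r-1)!, …, s, 1)ᵀ ∈ ℝ^r`. -/
def xi (r : ℕ) (s : ℝ) : Fin r → ℝ :=
  fun a => s ^ (r - 1 - (a : ℕ)) / (Nat.factorial (r - 1 - (a : ℕ)))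

/-- Support function `h_K(y) = sup_{x ∈ K} ⟨y, x⟩` of a set `K`. -/
def sptFn {ι : Type*} [Fintype ι] (K : Set (ι → ℝ)) (y : ι → ℝ) : ℝ :=
  sSup ((fun x => y ⬝ᵥ x) '' K)

/-- The Euclidean (2-)norm on `ι → ℝ`. -/
def euclNorm {ι : Type*} [Fintype ι] (y : ι → ℝ) : ℝ :=
  Real.sqrt (∑ i, y i ^ 2)

/-- The `p`-norm on `ℝ^m`, `p ∈ [1,∞]`. -/
def pnorm (p : ℝ≥0∞) [Fact (1 ≤ p)] {m : ℕ} (u : Fin m → ℝ) : ℝ :=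
  ‖(WithLp.equiv p (Fin m → ℝ)).symm u‖

/-- The (forward) reach set at time `t` of `ẋ = Ax + Bu`, from initial condition
`x₀`, over measurable inputs selected from the set-valued uncertainty `U`. -/
def reachSet {N M : Type*} [Fintype N] [DecidableEq N] [Fintype M]
    (A : Matrix N N ℝ) (B : Matrix N M ℝ) (x0 : N → ℝ) (t : ℝ)
    (U : ℝ → Set (M → ℝ)) : Set (N → ℝ) :=
  {x | ∃ u : ℝ → M → ℝ, Measurable u ∧ (∀ s ∈ Set.Icc 0 t, u s ∈ U s) ∧
    x = NormedSpace.exp (t • A) *ᵥ x0 +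
      ∫ s in (0:ℝ)..t, NormedSpace.exp (s • A) *ᵥ (B *ᵥ u s)}

/-- Block-diagonal integrator state matrix `A = blockdiag(A_1,…,A_m)`. -/
def blkA {m : ℕ} (r : Fin m → ℕ) : Matrix (Σ j, Fin (r j)) (Σ j, Fin (r j)) ℝ :=
  fun p q => if p.1 = q.1 ∧ (q.2 : ℕ) = (p.2 : ℕ) + 1 then 1 else 0

/-- Block-diagonal integrator input matrix `B = blockdiag(b_1,…,b_m)`, `b_j = e_{r_j}`. -/
def blkB {m : ℕ} (r : Fin m → ℕ) : Matrix (Σ j, Fin (r j)) (Fin m) ℝ :=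
  fun p k => if p.1 = k ∧ (p.2 : ℕ) = r p.1 - 1 then 1 else 0

/-- Single-input integrator reach set with scalar input confined to `[α(s), β(s)]`. -/
def reachSet1 {r : ℕ} (x0 : Fin r → ℝ) (t : ℝ) (α β : ℝ → ℝ) : Set (Fin r → ℝ) :=
  {x | ∃ u : ℝ → ℝ, Measurable u ∧ (∀ s ∈ Set.Icc 0 t, u s ∈ Set.Icc (α s) (β s)) ∧
    x = NormedSpace.exp (t • shiftMat r) *ᵥ x0 + ∫ s in (0:ℝ)..t, u s • xi r s}

/-!
If `x` lies in both reach sets, pairing `x` with `y` and applying Hölder's inequality to the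
input terms pointwise bounds `⟨y, x⟩` by the support function of `X_t^A` at `y`, and `⟨-y, x⟩`
by that of `X_t^B` at `-y`; adding the two bounds gives `0 ≤ f₀(y)` for every `y`, which is
impossible when `p̃* < 0`. Losslessness comes from the positive homogeneity of `f₀`: a point `y`
of the unit ball with `f₀(y) < 0` is nonzero, and `y / ‖y‖₂` lies on the unit sphere with the
smaller value `f₀(y) / ‖y‖₂`.
-/

open Set

-- Matrices carry no canonical norm; any of them, here the `ℓ∞` operator norm, induces the
-- product topology.
theorem Matrix.continuous_exp_smul {ι : Type*} [Fintype ι] [DecidableEq ι]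
    (A : Matrix ι ι ℝ) : Continuous fun s : ℝ => NormedSpace.exp (s • A) := by
  let : NormedRing (Matrix ι ι ℝ) := Matrix.linftyOpNormedRing
  let : NormedAlgebra ℝ (Matrix ι ι ℝ) := Matrix.linftyOpNormedAlgebra
  refine Continuous.comp ?_ (continuous_id.smul continuous_const)
  exact continuous_iff_continuousAt.2 fun x => (NormedSpace.exp_analytic (𝕂 := ℝ) x).continuousAt

theorem dotProduct_intervalIntegral {ι : Type*} [Fintype ι] {f : ℝ → ι → ℝ} {a b : ℝ}
    {μ : Measure ℝ} (hf : IntervalIntegrable f μ a b) (y : ι → ℝ) :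
    y ⬝ᵥ ∫ x in a..b, f x ∂μ = ∫ x in a..b, y ⬝ᵥ f x ∂μ :=
  ((dotProductBilin ℝ ℝ y).toContinuousLinearMap.intervalIntegral_comp_comm hf).symm

theorem IntervalIntegrable.dotProduct_left {ι : Type*} [Fintype ι] {f : ℝ → ι → ℝ} {a b : ℝ}
    {μ : Measure ℝ} (hf : IntervalIntegrable f μ a b) (y : ι → ℝ) :
    IntervalIntegrable (fun x => y ⬝ᵥ f x) μ a b :=
  let L := (dotProductBilin ℝ ℝ y).toContinuousLinearMap
  ⟨L.integrable_comp hf.1, L.integrable_comp hf.2⟩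

theorem MeasureTheory.IntegrableOn.continuousOn_mulVec {X N M : Type*} [TopologicalSpace X]
    [T2Space X] [MeasurableSpace X] [OpensMeasurableSpace X] {μ : Measure X} [Fintype N]
    [Fintype M]
    {K : Set X} (hK : IsCompact K) {F : X → Matrix N M ℝ} (hF : ContinuousOn F K)
    {u : X → M → ℝ} (hu : IntegrableOn u K μ) : IntegrableOn (fun x => F x *ᵥ u x) K μ := by
  refine integrable_pi_iff.2 fun i => integrable_finsetSum _ fun k _ => ?_
  exact IntegrableOn.continuousOn_mul
    ((continuous_apply k).comp_continuousOn ((continuous_apply i).comp_continuousOn hF))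
    (integrable_pi_iff.1 hu k) hK

section Holder

variable {ι : Type*} [Fintype ι]

theorem dotProduct_le_norm_toLp_top_mul_norm_toLp_one (v w : ι → ℝ) :
    v ⬝ᵥ w ≤ ‖WithLp.toLp ⊤ v‖ * ‖WithLp.toLp 1 w‖ := by
  rw [PiLp.norm_toLp, PiLp.norm_eq_of_L1, Finset.mul_sum]
  refine Finset.sum_le_sum fun i _ => ?_
  calc v i * w i ≤ ‖v i‖ * ‖w i‖ := by rw [← norm_mul]; exact Real.le_norm_self _
    _ ≤ ‖v‖ * ‖w i‖ := by gcongr; exact norm_le_pi_norm v i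

theorem dotProduct_le_norm_toLp_mul_norm_toLp {p q : ℝ≥0∞} [Fact (1 ≤ p)] [Fact (1 ≤ q)]
    (hpq : p.HolderConjugate q) (v w : ι → ℝ) :
    v ⬝ᵥ w ≤ ‖WithLp.toLp p v‖ * ‖WithLp.toLp q w‖ := by
  rcases eq_or_ne p ⊤ with rfl | hp
  · obtain rfl : q = 1 := hpq.eq_top_iff_eq_one.1 rfl
    exact dotProduct_le_norm_toLp_top_mul_norm_toLp_one v w
  rcases eq_or_ne q ⊤ with rfl | hq
  · obtain rfl : p = 1 := hpq.symm.eq_top_iff_eq_one.1 rfl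
    rw [dotProduct_comm, mul_comm]
    exact dotProduct_le_norm_toLp_top_mul_norm_toLp_one w v
  rw [PiLp.norm_eq_sum (ENNReal.toReal_pos hpq.ne_zero hp),
    PiLp.norm_eq_sum (ENNReal.toReal_pos hpq.symm.ne_zero hq)]
  simpa only [Real.norm_eq_abs, dotProduct] using
    Real.inner_le_Lp_mul_Lq Finset.univ v w (hpq.toReal_of_ne_top hp hq)

end Holder

section pnorm

variable (p : ℝ≥0∞) [Fact (1 ≤ p)] {m : ℕ}

theorem pnorm_smul (a : ℝ) (u : Fin m → ℝ) : pnorm p (a • u) = |a| * pnorm p u :=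
  norm_smul a (WithLp.toLp p u)

theorem pnorm_neg (u : Fin m → ℝ) : pnorm p (-u) = pnorm p u :=
  norm_neg (WithLp.toLp p u)

theorem norm_le_pnorm (u : Fin m → ℝ) : ‖u‖ ≤ pnorm p u :=
  (pi_norm_le_iff_of_nonneg (norm_nonneg _)).2 fun k => PiLp.norm_apply_le (WithLp.toLp p u) k

theorem continuous_pnorm : Continuous fun u : Fin m → ℝ => pnorm p u :=
  continuous_norm.comp (PiLp.continuous_toLp p _)

end pnorm

section ReachSet

variable {N : Type*} [Fintype N] [DecidableEq N] {m : ℕ} {p q : ℝ≥0∞} [Fact (1 ≤ p)]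
  [Fact (1 ≤ q)]

theorem dotProduct_le_of_mem_reachSet (hpq : p.HolderConjugate q) {A : Matrix N N ℝ}
    {B : Matrix N (Fin m) ℝ} {x0 x : N → ℝ} {t : ℝ} (ht : 0 ≤ t) {l : ℝ → ℝ}
    (hl : ContinuousOn l (Icc 0 t))
    (hx : x ∈ reachSet A B x0 t (fun s => {u | pnorm p u ≤ l s})) (y : N → ℝ) :
    y ⬝ᵥ x ≤ y ⬝ᵥ (NormedSpace.exp (t • A) *ᵥ x0) +
      ∫ s in (0:ℝ)..t, l s * pnorm q ((NormedSpace.exp (s • A) * B)ᵀ *ᵥ y) := by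
  obtain ⟨u, hu, hul, rfl⟩ := hx
  have hΦ : Continuous fun s : ℝ => NormedSpace.exp (s • A) * B :=
    (Matrix.continuous_exp_smul A).matrix_mul continuous_const
  obtain ⟨C, hC⟩ := isCompact_Icc.exists_bound_of_continuousOn hl
  have hu_int : IntegrableOn u (Icc 0 t) :=
    Measure.integrableOn_of_bounded (M := C) measure_Icc_lt_top.ne hu.aestronglyMeasurable
      ((ae_restrict_iff' measurableSet_Icc).2 (ae_of_all _ fun s hs =>
        (norm_le_pnorm p (u s)).trans ((hul s hs).trans ((Real.le_norm_self _).trans (hC s hs)))))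
  have hφ : IntervalIntegrable (fun s => NormedSpace.exp (s • A) *ᵥ (B *ᵥ u s)) volume 0 t := by
    simp only [mulVec_mulVec]
    exact (intervalIntegrable_iff_integrableOn_Icc_of_le ht).2
      (hu_int.continuousOn_mulVec isCompact_Icc hΦ.continuousOn)
  rw [dotProduct_add, dotProduct_intervalIntegral hφ, add_le_add_iff_left]
  refine intervalIntegral.integral_mono_on ht (hφ.dotProduct_left y) ?_ fun s hs => ?_
  · refine ContinuousOn.intervalIntegrable_of_Icc ht (hl.mul ?_)
    exact ((continuous_pnorm q).comp
      ((hΦ.matrix_transpose).matrix_mulVec continuous_const)).continuousOn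
  calc y ⬝ᵥ (NormedSpace.exp (s • A) *ᵥ (B *ᵥ u s))
      = ((NormedSpace.exp (s • A) * B)ᵀ *ᵥ y) ⬝ᵥ u s := by
        rw [mulVec_mulVec, dotProduct_mulVec, ← mulVec_transpose]
    _ ≤ pnorm q ((NormedSpace.exp (s • A) * B)ᵀ *ᵥ y) * pnorm p (u s) :=
        dotProduct_le_norm_toLp_mul_norm_toLp hpq.symm _ _
    _ ≤ l s * pnorm q ((NormedSpace.exp (s • A) * B)ᵀ *ᵥ y) := by
        rw [mul_comm]; exact mul_le_mul_of_nonneg_right (hul s hs) (norm_nonneg _)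

theorem nonneg_of_mem_reachSet_inter (hpq : p.HolderConjugate q) {A : Matrix N N ℝ}
    {B : Matrix N (Fin m) ℝ} {x0A x0B x : N → ℝ} {t : ℝ} (ht : 0 ≤ t) {lA lB : ℝ → ℝ}
    (hlA : ContinuousOn lA (Icc 0 t)) (hlB : ContinuousOn lB (Icc 0 t))
    (hxA : x ∈ reachSet A B x0A t (fun s => {u | pnorm p u ≤ lA s}))
    (hxB : x ∈ reachSet A B x0B t (fun s => {u | pnorm p u ≤ lB s})) (y : N → ℝ) :
    0 ≤ (NormedSpace.exp (t • A) *ᵥ (x0A - x0B)) ⬝ᵥ y +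
      ∫ s in (0:ℝ)..t, pnorm q (((lA s + lB s) • (NormedSpace.exp (s • A) * B))ᵀ *ᵥ y) := by
  have hν : Continuous fun s : ℝ => pnorm q ((NormedSpace.exp (s • A) * B)ᵀ *ᵥ y) :=
    (continuous_pnorm q).comp (((Matrix.continuous_exp_smul A).matrix_mul
      continuous_const).matrix_transpose.matrix_mulVec continuous_const)
  have hint : ∀ {l : ℝ → ℝ}, ContinuousOn l (Icc 0 t) → IntervalIntegrable
      (fun s => l s * pnorm q ((NormedSpace.exp (s • A) * B)ᵀ *ᵥ y)) volume 0 t := fun hl =>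
    (hl.mul hν.continuousOn).intervalIntegrable_of_Icc ht
  have hA := dotProduct_le_of_mem_reachSet hpq ht hlA hxA y
  have hB := dotProduct_le_of_mem_reachSet hpq ht hlB hxB (-y)
  simp only [mulVec_neg, pnorm_neg, neg_dotProduct] at hB
  calc (0 : ℝ)
      ≤ (NormedSpace.exp (t • A) *ᵥ (x0A - x0B)) ⬝ᵥ y +
        ∫ s in (0:ℝ)..t, (lA s + lB s) * pnorm q ((NormedSpace.exp (s • A) * B)ᵀ *ᵥ y) := by
        simp only [add_mul]
        rw [intervalIntegral.integral_add (hint hlA) (hint hlB), mulVec_sub, sub_dotProduct,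
          dotProduct_comm _ y, dotProduct_comm _ y]
        linarith
    _ ≤ _ := by
        gcongr
        refine intervalIntegral.integral_mono_on ht (hint (hlA.add hlB)) ?_ fun s _ => ?_
        · simp only [transpose_smul, smul_mulVec, pnorm_smul]
          exact ((hlA.add hlB).abs.mul hν.continuousOn).intervalIntegrable_of_Icc ht
        · rw [transpose_smul, smul_mulVec, pnorm_smul]
          exact mul_le_mul_of_nonneg_right (le_abs_self _) (norm_nonneg _)

end ReachSet

theorem dotProduct_add_integral_pnorm_smul {N : Type*} [Fintype N] {m : ℕ} (q : ℝ≥0∞)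
    [Fact (1 ≤ q)] (c : N → ℝ) (G : ℝ → Matrix N (Fin m) ℝ) (t : ℝ)
    {a : ℝ} (ha : 0 ≤ a) (y : N → ℝ) :
    c ⬝ᵥ (a • y) + ∫ s in (0:ℝ)..t, pnorm q ((G s)ᵀ *ᵥ (a • y)) =
      a * (c ⬝ᵥ y + ∫ s in (0:ℝ)..t, pnorm q ((G s)ᵀ *ᵥ y)) := by
  simp only [mulVec_smul, pnorm_smul, abs_of_nonneg ha, dotProduct_smul, smul_eq_mul,
    intervalIntegral.integral_const_mul, mul_add]

theorem sInf_image_norm_eq_one_eq_of_sInf_image_norm_le_one_neg {E : Type*}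
    [NormedAddCommGroup E] [NormedSpace ℝ E] {f : E → ℝ}
    (hf : ∀ a : ℝ, 0 ≤ a → ∀ y, f (a • y) = a * f y)
    (hneg : sInf (f '' {y | ‖y‖ ≤ 1}) < 0) :
    sInf (f '' {y | ‖y‖ = 1}) = sInf (f '' {y | ‖y‖ ≤ 1}) := by
  set T := f '' {y | ‖y‖ ≤ 1}
  set S := f '' {y | ‖y‖ = 1}
  -- `sInf T < 0` excludes the junk value `sInf T = 0` of an empty or unbounded set.
  have hT_ne : T.Nonempty := nonempty_iff_ne_empty.2 fun h => by simp [h] at hneg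
  have hT_bdd : BddBelow T := by
    by_contra h
    exact hneg.ne (Real.sInf_of_not_bddBelow h)
  have hST : S ⊆ T := image_mono fun y (hy : ‖y‖ = 1) => hy.le
  have normalize : ∀ y, ‖y‖ ≤ 1 → f y < 0 → ∃ z, ‖z‖ = 1 ∧ f z ≤ f y := by
    intro y hy hfy
    have hy0 : 0 < ‖y‖ := norm_pos_iff.2 fun h => by simp [h, by simpa using hf 0 le_rfl 0] at hfy
    refine ⟨‖y‖⁻¹ • y, norm_smul_inv_norm (norm_pos_iff.1 hy0), ?_⟩
    rw [hf _ (inv_nonneg.2 hy0.le)]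
    nlinarith [one_le_inv_iff₀.2 ⟨hy0, hy⟩]
  obtain ⟨_, ⟨y0, hy0, rfl⟩, hfy0⟩ := exists_lt_of_csInf_lt hT_ne hneg
  obtain ⟨z0, hz0, -⟩ := normalize y0 hy0 hfy0
  refine le_antisymm ?_ (csInf_le_csInf hT_bdd ⟨_, z0, hz0, rfl⟩ hST)
  by_contra! hlt
  obtain ⟨_, ⟨y, hy, rfl⟩, hfy⟩ := exists_lt_of_csInf_lt hT_ne (lt_min hlt hneg)
  obtain ⟨z, hz, hfz⟩ := normalize y hy (hfy.trans_le (min_le_right _ _))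
  have := csInf_le (hT_bdd.mono hST) ⟨z, hz, rfl⟩
  linarith [min_le_left (sInf S) 0]

theorem euclNorm_eq_norm_toLp {ι : Type*} [Fintype ι] (y : ι → ℝ) :
    euclNorm y = ‖WithLp.toLp 2 y‖ := by
  simp [EuclideanSpace.norm_eq, euclNorm]

theorem image_setOf_euclNorm {ι : Type*} [Fintype ι] (f : (ι → ℝ) → ℝ) (P : ℝ → Prop) :
    f '' {y | P (euclNorm y)} = (f ∘ WithLp.ofLp) '' {x : EuclideanSpace ℝ ι | P ‖x‖} := by
  rw [image_comp]
  congr 1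
  ext y
  refine ⟨fun hy => ⟨WithLp.toLp 2 y, ?_, rfl⟩, ?_⟩
  · show P ‖WithLp.toLp 2 y‖
    rwa [← euclNorm_eq_norm_toLp]
  · rintro ⟨x, hx, rfl⟩
    show P (euclNorm x.ofLp)
    rwa [euclNorm_eq_norm_toLp]

theorem convexified_neg_implies_lossless_and_disjoint_general (m : ℕ)
    (r : Fin m → ℕ) (t : ℝ) (ht : 0 < t)
    (p q : ℝ≥0∞) [Fact (1 ≤ p)] [Fact (1 ≤ q)] (hpq : p.HolderConjugate q)
    (lA lB : ℝ → ℝ) (hlA : ContinuousOn lA (Set.Icc 0 t))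
    (hlB : ContinuousOn lB (Set.Icc 0 t))
    (x0A x0B : (Σ j, Fin (r j)) → ℝ)
    (XA XB : Set ((Σ j, Fin (r j)) → ℝ))
    (hXA : XA = reachSet (blkA r) (blkB r) x0A t (fun s => {u | pnorm p u ≤ lA s}))
    (hXB : XB = reachSet (blkA r) (blkB r) x0B t (fun s => {u | pnorm p u ≤ lB s}))
    (c : (Σ j, Fin (r j)) → ℝ)
    (hc : c = NormedSpace.exp (t • blkA r) *ᵥ (x0A - x0B))
    (G : ℝ → Matrix (Σ j, Fin (r j)) (Fin m) ℝ)
    (hG : ∀ s, G s = (lA s + lB s) • (NormedSpace.exp (s • blkA r) * blkB r))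
    (f0 : ((Σ j, Fin (r j)) → ℝ) → ℝ)
    (hf0 : f0 = fun y => c ⬝ᵥ y + ∫ s in (0:ℝ)..t, pnorm q ((G s)ᵀ *ᵥ y))
    (ptil pstar : ℝ) (hptil : ptil = sInf (f0 '' {y | euclNorm y ≤ 1}))
    (hpstar : pstar = sInf (f0 '' {y | euclNorm y = 1}))
    (hneg : ptil < 0) :
    ptil = pstar ∧ pstar < 0 ∧ XA ∩ XB = ∅ := by
  have hhom : ∀ a : ℝ, 0 ≤ a → ∀ y, f0 (a • y) = a * f0 y := fun a ha y => by
    simp only [hf0]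
    exact dotProduct_add_integral_pnorm_smul q c G t ha y
  have hlossless : ptil = pstar := by
    rw [hptil, image_setOf_euclNorm f0 (· ≤ 1)] at hneg ⊢
    rw [hpstar, image_setOf_euclNorm f0 (· = 1)]
    exact (sInf_image_norm_eq_one_eq_of_sInf_image_norm_le_one_neg (f := f0 ∘ WithLp.ofLp)
      (fun a ha x => by simpa using hhom a ha x.ofLp) hneg).symm
  refine ⟨hlossless, hlossless ▸ hneg, eq_empty_iff_forall_notMem.2 ?_⟩
  rintro x ⟨hxA, hxB⟩
  refine hneg.not_ge (hptil ▸ Real.sInf_nonneg ?_)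
  rintro _ ⟨y, -, rfl⟩
  subst hXA hXB hc hf0
  simp only [hG]
  exact nonneg_of_mem_reachSet_inter hpq ht.le hlA hlB hxA hxB y

/-- for integrator agents with `p`-norm-ball input uncertainties, if the
optimal value `p̃*` of the convexified problem is negative, then the convexification is
lossless (`p̃* = p* < 0`) and the reach sets are disjoint. -/
theorem convexified_neg_implies_lossless_and_disjoint (m : ℕ) (hm : 1 ≤ m)
    (r : Fin m → ℕ) (hr : ∀ j, 1 ≤ r j) (t : ℝ) (ht : 0 < t)
    (p q : ℝ≥0∞) [Fact (1 ≤ p)] [Fact (1 ≤ q)] (hpq : p.HolderConjugate q)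
    (lA lB : ℝ → ℝ) (hlA : ContinuousOn lA (Set.Icc 0 t))
    (hlB : ContinuousOn lB (Set.Icc 0 t))
    (hlApos : ∀ s ∈ Set.Icc (0:ℝ) t, 0 < lA s)
    (hlBpos : ∀ s ∈ Set.Icc (0:ℝ) t, 0 < lB s)
    (x0A x0B : (Σ j, Fin (r j)) → ℝ)
    (XA XB : Set ((Σ j, Fin (r j)) → ℝ))
    (hXA : XA = reachSet (blkA r) (blkB r) x0A t (fun s => {u | pnorm p u ≤ lA s}))
    (hXB : XB = reachSet (blkA r) (blkB r) x0B t (fun s => {u | pnorm p u ≤ lB s}))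
    (c : (Σ j, Fin (r j)) → ℝ)
    (hc : c = NormedSpace.exp (t • blkA r) *ᵥ (x0A - x0B))
    (G : ℝ → Matrix (Σ j, Fin (r j)) (Fin m) ℝ)
    (hG : ∀ s, G s = (lA s + lB s) • (NormedSpace.exp (s • blkA r) * blkB r))
    (f0 : ((Σ j, Fin (r j)) → ℝ) → ℝ)
    (hf0 : f0 = fun y => c ⬝ᵥ y + ∫ s in (0:ℝ)..t, pnorm q ((G s)ᵀ *ᵥ y))
    (ptil pstar : ℝ) (hptil : ptil = sInf (f0 '' {y | euclNorm y ≤ 1}))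
    (hpstar : pstar = sInf (f0 '' {y | euclNorm y = 1}))
    (hneg : ptil < 0) :
    ptil = pstar ∧ pstar < 0 ∧ XA ∩ XB = ∅ :=
  convexified_neg_implies_lossless_and_disjoint_general m r t ht p q hpq lA lB hlA hlB x0A x0B XA XB
    hXA hXB c hc G hG f0 hf0 ptil pstar hptil hpstar hneg
end
end

section
/- Let r ≥ 1, let A₀ ∈ ℝ^{r×r} be the nilpotent upper-shift matrix, and let ξ(s) := (s^{r−1}/(r−1)!, …, s, 1)ᵀ ∈ ℝ^r. Let t > 0; for i ∈ {A, B} let x₀^i ∈ ℝ^r and let α^i, β^i : [0,t] → ℝ be continuous with α^i(s) ≤ β^i(s), and let X_t^i := { exp(tA₀)x₀^i + ∫₀ᵗ ξ(s) u(s) ds : u measurable, α^i(s) ≤ u(s) ≤ β^i(s) for all s }. Set μ^i(s) := (β^i(s) − α^i(s))/2, ν^i(s) := (β^i(s) + α^i(s))/2, c(t) := exp(tA₀)(x₀^A − x₀^B) + ∫₀ᵗ (ν^A(s) − ν^B(s)) ξ(s) ds, and f(y) := ⟨c(t), y⟩ + ∫₀ᵗ (μ^A(s) + μ^B(s)) |⟨y,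 ξ(s)⟩| ds. Let p̃* := min_{‖y‖₂ ≤ 1} f(y) and p* := min_{‖y‖₂ = 1} f(y). If p̃* < 0, then p̃* = p* < 0 and X_t^A ∩ X_t^B = ∅. -/
noncomputable section
open Matrix MeasureTheory TopologicalSpace Filter
open scoped ENNReal Pointwise

/-
The function `f y = ⟨c, y⟩ + ∫₀ᵗ (μᴬ + μᴮ) |⟨y, ξ⟩|` equals `h_{Xᴬ}(y) + h_{Xᴮ}(-y)` and is
positively homogeneous of degree one. Hence a point of the unit ball where `f` is negative
can be pushed out to the unit sphere, which only lowers the value: `p̃* = p* < 0`.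
If some `x` lay in `Xᴬ ∩ Xᴮ`, with inputs `uᴬ, uᴮ`, then `c = ∫₀ᵗ w ξ` with
`w = uᴮ - uᴬ + νᴬ - νᴮ` and `|w| ≤ μᴬ + μᴮ`, so `f ≥ 0` everywhere, contradicting `p̃* < 0`.
-/

open Metric Set

section PositivelyHomogeneous

variable {E : Type*} [NormedAddCommGroup E] [NormedSpace ℝ E] {f : E → ℝ}

lemma exists_mem_sphere_le_of_neg (hf : ∀ a : ℝ, 0 ≤ a → ∀ y, f (a • y) = a * f y) {y : E}
    (hy : ‖y‖ ≤ 1) (hfy : f y < 0) : ∃ z ∈ sphere (0 : E) 1, f z ≤ f y := by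
  have hf0 : f 0 = 0 := by simpa using hf 0 le_rfl 0
  have hy0 : y ≠ 0 := by
    rintro rfl
    exact hfy.ne hf0
  refine ⟨‖y‖⁻¹ • y, by simpa using norm_smul_inv_norm (𝕜 := ℝ) hy0, ?_⟩
  have : 1 ≤ ‖y‖⁻¹ := one_le_inv₀ (norm_pos_iff.2 hy0) |>.2 hy
  rw [hf _ (by positivity)]
  nlinarith

theorem sInf_image_sphere_eq_sInf_image_closedBall
    (hf : ∀ a : ℝ, 0 ≤ a → ∀ y, f (a • y) = a * f y)
    (hneg : sInf (f '' closedBall 0 1) < 0) :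
    sInf (f '' sphere 0 1) = sInf (f '' closedBall 0 1) := by
  have hball : (f '' closedBall 0 1).Nonempty := ⟨f 0, mem_image_of_mem f (by simp)⟩
  -- an unbounded-below set would have `sInf` equal to the junk value `0`
  have hbdd : BddBelow (f '' closedBall 0 1) := by
    by_contra h
    rw [Real.sInf_of_not_bddBelow h] at hneg
    exact lt_irrefl 0 hneg
  have hsub : f '' sphere 0 1 ⊆ f '' closedBall 0 1 := image_mono sphere_subset_closedBall
  obtain ⟨_, ⟨y₀, hy₀, rfl⟩, hfy₀⟩ := exists_lt_of_csInf_lt hball hneg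
  obtain ⟨z₀, hz₀, hz₀y₀⟩ := exists_mem_sphere_le_of_neg hf (mem_closedBall_zero_iff.1 hy₀) hfy₀
  refine le_antisymm (le_csInf hball ?_) (csInf_le_csInf hbdd ⟨f z₀, mem_image_of_mem f hz₀⟩ hsub)
  rintro _ ⟨y, hy, rfl⟩
  obtain ⟨z, hz, hzy⟩ : ∃ z ∈ sphere (0 : E) 1, f z ≤ f y := by
    rcases lt_or_ge (f y) 0 with hfy | hfy
    · exact exists_mem_sphere_le_of_neg hf (mem_closedBall_zero_iff.1 hy) hfy
    · exact ⟨z₀, hz₀, by linarith⟩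
  exact (csInf_le (hbdd.mono hsub) (mem_image_of_mem f hz)).trans hzy

end PositivelyHomogeneous

lemma euclNorm_eq_norm {ι : Type*} [Fintype ι] (y : ι → ℝ) :
    euclNorm y = ‖(WithLp.toLp 2 y : EuclideanSpace ℝ ι)‖ := by
  simp [euclNorm, EuclideanSpace.norm_eq]

lemma image_setOf_euclNorm_le_one {ι : Type*} [Fintype ι] (f : (ι → ℝ) → ℝ) :
    f '' {y | euclNorm y ≤ 1} = (f ∘ WithLp.ofLp) '' closedBall (0 : EuclideanSpace ℝ ι) 1 := by
  rw [image_comp, image_eq_preimage_of_inverse (WithLp.toLp_ofLp 2) (WithLp.ofLp_toLp 2)]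
  ext y
  simp [euclNorm_eq_norm]

lemma image_setOf_euclNorm_eq_one {ι : Type*} [Fintype ι] (f : (ι → ℝ) → ℝ) :
    f '' {y | euclNorm y = 1} = (f ∘ WithLp.ofLp) '' sphere (0 : EuclideanSpace ℝ ι) 1 := by
  rw [image_comp, image_eq_preimage_of_inverse (WithLp.toLp_ofLp 2) (WithLp.ofLp_toLp 2)]
  ext y
  simp [euclNorm_eq_norm]

lemma dotProduct_add_integral_mul_abs_smul {ι : Type*} [Fintype ι] (c : ι → ℝ) (m : ℝ → ℝ)
    (g : ℝ → ι → ℝ) (t : ℝ) {a : ℝ} (ha : 0 ≤ a) (y : ι → ℝ) :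
    c ⬝ᵥ (a • y) + ∫ s in (0:ℝ)..t, m s * |(a • y) ⬝ᵥ g s| =
      a * (c ⬝ᵥ y + ∫ s in (0:ℝ)..t, m s * |y ⬝ᵥ g s|) := by
  simp only [dotProduct_smul, smul_dotProduct, smul_eq_mul, abs_mul, abs_of_nonneg ha,
    mul_left_comm (m _) a, intervalIntegral.integral_const_mul]
  ring

lemma intervalIntegrable_smul_of_mem_Icc {E : Type*} [NormedAddCommGroup E] [NormedSpace ℝ E]
    {u α β : ℝ → ℝ} {g : ℝ → E} {t : ℝ} (ht : 0 ≤ t) (hu : AEStronglyMeasurable u)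
    (hα : ContinuousOn α (Icc 0 t)) (hβ : ContinuousOn β (Icc 0 t))
    (hg : ContinuousOn g (Icc 0 t)) (huαβ : ∀ s ∈ Icc 0 t, u s ∈ Icc (α s) (β s)) :
    IntervalIntegrable (fun s => u s • g s) volume 0 t := by
  rw [intervalIntegrable_iff_integrableOn_Icc_of_le ht]
  refine IntegrableOn.smul_continuousOn ?_ hg isCompact_Icc
  exact integrable_of_le_of_le hu.restrict
    (ae_restrict_of_forall_mem measurableSet_Icc fun s hs => (huαβ s hs).1)
    (ae_restrict_of_forall_mem measurableSet_Icc fun s hs => (huαβ s hs).2)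
    (hα.integrableOn_Icc) (hβ.integrableOn_Icc)

lemma integral_smul_dotProduct_add_integral_abs_nonneg {ι : Type*} [Fintype ι]
    {w m : ℝ → ℝ} {g : ℝ → ι → ℝ} {t : ℝ} (ht : 0 ≤ t) (y : ι → ℝ)
    (hw : IntervalIntegrable (fun s => w s • g s) volume 0 t)
    (hm : IntervalIntegrable (fun s => m s * |y ⬝ᵥ g s|) volume 0 t)
    (hwm : ∀ s ∈ Icc 0 t, |w s| ≤ m s) :
    0 ≤ (∫ s in (0:ℝ)..t, w s • g s) ⬝ᵥ y + ∫ s in (0:ℝ)..t, m s * |y ⬝ᵥ g s| := by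
  let L : (ι → ℝ) →L[ℝ] ℝ := LinearMap.toContinuousLinearMap ((dotProductBilin ℝ ℝ).flip y)
  have hL : ∀ v, L v = v ⬝ᵥ y := fun v => rfl
  have hLw : IntervalIntegrable (fun s => L (w s • g s)) volume 0 t :=
    ⟨L.integrable_comp hw.1, L.integrable_comp hw.2⟩
  rw [← hL, ← L.intervalIntegral_comp_comm hw, ← intervalIntegral.integral_add hLw hm]
  refine intervalIntegral.integral_nonneg ht fun s hs => ?_
  have : |w s * (y ⬝ᵥ g s)| ≤ m s * |y ⬝ᵥ g s| := by
    rw [abs_mul]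
    exact mul_le_mul_of_nonneg_right (hwm s hs) (abs_nonneg _)
  rw [hL, smul_dotProduct, smul_eq_mul, dotProduct_comm]
  linarith [neg_abs_le (w s * (y ⬝ᵥ g s))]

lemma continuous_xi (r : ℕ) : Continuous (xi r) :=
  continuous_pi fun _ => (continuous_pow _).div_const _

theorem nonneg_of_mem_inter_reachSet1 {r : ℕ} {t : ℝ} (ht : 0 ≤ t) {x0A x0B : Fin r → ℝ}
    {αA βA αB βB : ℝ → ℝ}
    (hαA : ContinuousOn αA (Icc 0 t)) (hβA : ContinuousOn βA (Icc 0 t))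
    (hαB : ContinuousOn αB (Icc 0 t)) (hβB : ContinuousOn βB (Icc 0 t)) {x : Fin r → ℝ}
    (hxA : x ∈ reachSet1 x0A t αA βA) (hxB : x ∈ reachSet1 x0B t αB βB) (y : Fin r → ℝ) :
    0 ≤ (NormedSpace.exp (t • shiftMat r) *ᵥ (x0A - x0B) +
        ∫ s in (0:ℝ)..t, ((βA s + αA s) / 2 - (βB s + αB s) / 2) • xi r s) ⬝ᵥ y +
      ∫ s in (0:ℝ)..t, ((βA s - αA s) / 2 + (βB s - αB s) / 2) * |y ⬝ᵥ xi r s| := by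
  obtain ⟨uA, huA_meas, huA, rfl⟩ := hxA
  obtain ⟨uB, huB_meas, huB, hx⟩ := hxB
  set ν := fun s => (βA s + αA s) / 2 - (βB s + αB s) / 2
  have hξ := (continuous_xi r).continuousOn (s := Icc 0 t)
  have IA := intervalIntegrable_smul_of_mem_Icc ht huA_meas.aestronglyMeasurable hαA hβA hξ huA
  have IB := intervalIntegrable_smul_of_mem_Icc ht huB_meas.aestronglyMeasurable hαB hβB hξ huB
  have Iν : IntervalIntegrable (fun s => ν s • xi r s) volume 0 t :=
    ContinuousOn.intervalIntegrable_of_Icc ht <|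
      (((hβA.add hαA).div_const 2).sub ((hβB.add hαB).div_const 2)).smul hξ
  have hc : NormedSpace.exp (t • shiftMat r) *ᵥ (x0A - x0B) + ∫ s in (0:ℝ)..t, ν s • xi r s =
      ∫ s in (0:ℝ)..t, (uB s - uA s + ν s) • xi r s := by
    have hdiff : NormedSpace.exp (t • shiftMat r) *ᵥ x0A - NormedSpace.exp (t • shiftMat r) *ᵥ x0B =
        (∫ s in (0:ℝ)..t, uB s • xi r s) - ∫ s in (0:ℝ)..t, uA s • xi r s := by
      rw [sub_eq_sub_iff_add_eq_add, hx, add_comm]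
    simp only [sub_smul, add_smul]
    rw [intervalIntegral.integral_add (IB.sub IA) Iν, intervalIntegral.integral_sub IB IA,
      mulVec_sub, hdiff]
  rw [hc]
  refine integral_smul_dotProduct_add_integral_abs_nonneg ht y ?_ ?_ fun s hs => ?_
  · simpa only [sub_smul, add_smul] using (IB.sub IA).add Iν
  · exact ContinuousOn.intervalIntegrable_of_Icc ht <|
      (((hβA.sub hαA).div_const 2).add ((hβB.sub hαB).div_const 2)).mul
        (continuous_const.dotProduct (continuous_xi r)).abs.continuousOn
  · obtain ⟨hαuA, huβA⟩ := huA s hs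
    obtain ⟨hαuB, huβB⟩ := huB s hs
    rw [abs_le]
    constructor <;> simp only [ν] <;> linarith

theorem box_convexified_neg_implies_lossless_and_disjoint_general (r : ℕ)
    (t : ℝ) (ht : 0 < t) (x0A x0B : Fin r → ℝ)
    (αA βA αB βB : ℝ → ℝ)
    (hαA : ContinuousOn αA (Set.Icc 0 t)) (hβA : ContinuousOn βA (Set.Icc 0 t))
    (hαB : ContinuousOn αB (Set.Icc 0 t)) (hβB : ContinuousOn βB (Set.Icc 0 t))
    (XA XB : Set (Fin r → ℝ))
    (hXA : XA = reachSet1 x0A t αA βA) (hXB : XB = reachSet1 x0B t αB βB)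
    (c : Fin r → ℝ)
    (hc : c = NormedSpace.exp (t • shiftMat r) *ᵥ (x0A - x0B) +
      ∫ s in (0:ℝ)..t, ((βA s + αA s) / 2 - (βB s + αB s) / 2) • xi r s)
    (f : (Fin r → ℝ) → ℝ)
    (hf : f = fun y => c ⬝ᵥ y +
      ∫ s in (0:ℝ)..t, ((βA s - αA s) / 2 + (βB s - αB s) / 2) * |y ⬝ᵥ xi r s|)
    (ptil pstar : ℝ) (hptil : ptil = sInf (f '' {y | euclNorm y ≤ 1}))
    (hpstar : pstar = sInf (f '' {y | euclNorm y = 1}))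
    (hneg : ptil < 0) :
    ptil = pstar ∧ pstar < 0 ∧ XA ∩ XB = ∅ := by
  rw [image_setOf_euclNorm_le_one] at hptil
  rw [image_setOf_euclNorm_eq_one] at hpstar
  subst hXA hXB hc hf hptil hpstar
  have hlossless := sInf_image_sphere_eq_sInf_image_closedBall
    (fun a ha y => dotProduct_add_integral_mul_abs_smul _ _ _ _ ha y.ofLp) hneg
  refine ⟨hlossless.symm, hlossless ▸ hneg, eq_empty_iff_forall_notMem.2 ?_⟩
  rintro x ⟨hxA, hxB⟩
  refine (Real.sInf_nonneg ?_).not_gt hneg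
  rintro _ ⟨y, -, rfl⟩
  exact nonneg_of_mem_inter_reachSet1 ht.le hαA hβA hαB hβB hxA hxB y.ofLp

/-- for single-input integrator agents with box input uncertainties, if the
optimal value `p̃*` of the convexified problem is negative, then the convexification is
lossless (`p̃* = p* < 0`) and the reach sets are disjoint. -/
theorem box_convexified_neg_implies_lossless_and_disjoint (r : ℕ) (hr : 1 ≤ r)
    (t : ℝ) (ht : 0 < t) (x0A x0B : Fin r → ℝ)
    (αA βA αB βB : ℝ → ℝ)
    (hαA : ContinuousOn αA (Set.Icc 0 t)) (hβA : ContinuousOn βA (Set.Icc 0 t))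
    (hαB : ContinuousOn αB (Set.Icc 0 t)) (hβB : ContinuousOn βB (Set.Icc 0 t))
    (hA : ∀ s ∈ Set.Icc (0:ℝ) t, αA s ≤ βA s)
    (hB : ∀ s ∈ Set.Icc (0:ℝ) t, αB s ≤ βB s)
    (XA XB : Set (Fin r → ℝ))
    (hXA : XA = reachSet1 x0A t αA βA) (hXB : XB = reachSet1 x0B t αB βB)
    (c : Fin r → ℝ)
    (hc : c = NormedSpace.exp (t • shiftMat r) *ᵥ (x0A - x0B) +
      ∫ s in (0:ℝ)..t, ((βA s + αA s) / 2 - (βB s + αB s) / 2) • xi r s)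
    (f : (Fin r → ℝ) → ℝ)
    (hf : f = fun y => c ⬝ᵥ y +
      ∫ s in (0:ℝ)..t, ((βA s - αA s) / 2 + (βB s - αB s) / 2) * |y ⬝ᵥ xi r s|)
    (ptil pstar : ℝ) (hptil : ptil = sInf (f '' {y | euclNorm y ≤ 1}))
    (hpstar : pstar = sInf (f '' {y | euclNorm y = 1}))
    (hneg : ptil < 0) :
    ptil = pstar ∧ pstar < 0 ∧ XA ∩ XB = ∅ :=
  box_convexified_neg_implies_lossless_and_disjoint_general r t ht x0A x0B αA βA αB βB hαA hβA hαB
    hβB XA XB hXA hXB c hc f hf ptil pstar hptil hpstar hneg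
end
end
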